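/- For every L ≥ 2, all J, q > 0, and every configuration σ ∈ S, the weak symmetry condition holds: ∑_{τ∈S} e^{−H(σ,τ)} = ∑_{τ∈S} e^{−H(τ,σ)}, even though in general H(σ,τ) ≠ H(τ,σ). -/

import Mathlib

open Real Filter MeasureTheory

noncomputable section

/-- A site of the 2d discrete torus `(ℤ/Lℤ)²`. -/
abbrev Site (L : ℕ) := ZMod L × ZMod L

/-- A spin configuration on the torus, `true = +1`, `false = -1`. -/
abbrev Cfg (L : ℕ) := Site L → Bool

/-- The real spin value of a Boolean spin. -/
def spin (b : Bool) : ℝ := if b then 1 else -1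

/-- The up neighbor. -/
def upN {L : ℕ} (x : Site L) : Site L := (x.1, x.2 + 1)
/-- The right neighbor. -/
def rtN {L : ℕ} (x : Site L) : Site L := (x.1 + 1, x.2)
/-- The down neighbor. -/
def dnN {L : ℕ} (x : Site L) : Site L := (x.1, x.2 - 1)
/-- The left neighbor. -/
def lfN {L : ℕ} (x : Site L) : Site L := (x.1 - 1, x.2)

/-- The pair Hamiltonian `H(σ,τ) = −∑_x [J σ_x (τ_{x^u} + τ_{x^r}) + q σ_x τ_x]`. -/
def pairH (L : ℕ) [NeZero L] (J q : ℝ) (σ τ : Cfg L) : ℝ :=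
  - ∑ x : Site L, (J * spin (σ x) * (spin (τ (upN x)) + spin (τ (rtN x)))
      + q * spin (σ x) * spin (τ x))

/-- The normalization `Z_σ = ∑_τ e^{−H(σ,τ)}`. -/
def Zconf (L : ℕ) [NeZero L] (J q : ℝ) (σ : Cfg L) : ℝ :=
  ∑ τ : Cfg L, Real.exp (-(pairH L J q σ τ))

/-- The PCA transition probabilities `P(σ,τ) = e^{−H(σ,τ)}/Z_σ`. -/
def Ptrans (L : ℕ) [NeZero L] (J q : ℝ) (σ τ : Cfg L) : ℝ :=
  Real.exp (-(pairH L J q σ τ)) / Zconf L J q σ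

/-- `Z_PCA = ∑_σ Z_σ`. -/
def Zpca (L : ℕ) [NeZero L] (J q : ℝ) : ℝ := ∑ σ : Cfg L, Zconf L J q σ

/-- The PCA stationary measure `π_PCA(σ) = Z_σ / Z_PCA`. -/
def piPCA (L : ℕ) [NeZero L] (J q : ℝ) (σ : Cfg L) : ℝ := Zconf L J q σ / Zpca L J q

/-- The Ising Hamiltonian `H_G(σ) = −J ∑_{(x,y)} σ_x σ_y`, the sum over (unordered)
nearest-neighbor pairs of the torus, each pair being counted once via its up/right bond. -/
def isingH (L : ℕ) [NeZero L] (J : ℝ) (σ : Cfg L) : ℝ :=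
  - J * ∑ x : Site L, spin (σ x) * (spin (σ (upN x)) + spin (σ (rtN x)))

/-- The Ising partition function. -/
def Zg (L : ℕ) [NeZero L] (J : ℝ) : ℝ := ∑ σ : Cfg L, Real.exp (-(isingH L J σ))

/-- The Ising Gibbs measure `π_G(σ) = e^{−H_G(σ)}/Z_G`. -/
def piG (L : ℕ) [NeZero L] (J : ℝ) (σ : Cfg L) : ℝ := Real.exp (-(isingH L J σ)) / Zg L J

/-- Total variation distance between two measures on configuration space. -/
def tv (L : ℕ) [NeZero L] (μ ν : Cfg L → ℝ) : ℝ := (1/2) * ∑ σ : Cfg L, |μ σ - ν σ|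

/-- The all-plus configuration. -/
def plusCfg (L : ℕ) : Cfg L := fun _ => true
/-- The all-minus configuration. -/
def minusCfg (L : ℕ) : Cfg L := fun _ => false

/-!
Summing out `τ` factorises: `∑_τ e^{-H(σ,τ)} = ∏_y 2 cosh(J(σ_{y^d} + σ_{y^l}) + q σ_y)` and
`∑_τ e^{-H(τ,σ)} = ∏_y 2 cosh(J(σ_{y^u} + σ_{y^r}) + q σ_y)`. The logarithm of a local factor is a
function of three spins that is symmetric in the first two and invariant under a global spin
flip, hence of the form `A + B st + C (s + t) u`. Summed over the torus, each of these terms is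
invariant under exchanging the down/left neighbours for the up/right ones, by a translation.
-/

lemma spin_not (b : Bool) : spin (!b) = -spin b := by
  cases b <;> simp [spin]

theorem sum_exp_sum_mul_spin {ι : Type*} [Fintype ι] [DecidableEq ι] (c : ι → ℝ) :
    ∑ τ : ι → Bool, Real.exp (∑ i, c i * spin (τ i)) = ∏ i, 2 * Real.cosh (c i) := by
  calc ∑ τ : ι → Bool, Real.exp (∑ i, c i * spin (τ i))
      = ∏ i, ∑ b : Bool, Real.exp (c i * spin b) := by
        simp only [Real.exp_sum, Fintype.prod_sum]
    _ = ∏ i, 2 * Real.cosh (c i) := by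
        simp only [Fintype.sum_bool, spin, Real.cosh_eq]
        refine Finset.prod_congr rfl fun i _ => by norm_num; ring

theorem exists_eq_add_mul_spin_of_symm_of_even (g : Bool → Bool → Bool → ℝ)
    (hsymm : ∀ s t u, g s t u = g t s u) (heven : ∀ s t u, g (!s) (!t) (!u) = g s t u) :
    ∃ A B C : ℝ, ∀ s t u,
      g s t u = A + B * (spin s * spin t) + C * ((spin s + spin t) * spin u) := by
  refine ⟨(g true true true + g true true false) / 4 + g true false true / 2,
    (g true true true + g true true false) / 4 - g true false true / 2,
    (g true true true - g true true false) / 4, fun s t u => ?_⟩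
  have hTFF := heven false true true
  have hFTT := hsymm false true true
  have hFTF := heven true false true
  have hFFT := heven true true false
  have hFFF := heven true true true
  cases s <;> cases t <;> cases u <;> simp only [spin] at * <;> norm_num at * <;> linarith

section Translation

variable {G : Type*} [AddCommGroup G] [Fintype G]

lemma sum_comp_add_eq_sum_sub (F : G → G → ℝ) (e : G) :
    ∑ x, F x (x + e) = ∑ y, F (y - e) y := by
  rw [← Equiv.sum_comp (Equiv.addRight e) (fun y => F (y - e) y)]
  simp only [Equiv.coe_addRight, add_sub_cancel_right]

theorem sum_symm_even_sub_eq_sum_add (g : Bool → Bool → Bool → ℝ)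
    (hsymm : ∀ s t u, g s t u = g t s u) (heven : ∀ s t u, g (!s) (!t) (!u) = g s t u)
    (σ : G → Bool) (a b : G) :
    ∑ y, g (σ (y - a)) (σ (y - b)) (σ y) = ∑ y, g (σ (y + a)) (σ (y + b)) (σ y) := by
  obtain ⟨A, B, C, hg⟩ := exists_eq_add_mul_spin_of_symm_of_even g hsymm heven
  have shift : ∀ a b : G, ∑ y, spin (σ (y - a)) * spin (σ (y - b))
      = ∑ y, spin (σ (y + a)) * spin (σ (y + b)) := fun a b => by
    rw [← Equiv.sum_comp (Equiv.addRight (a + b))]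
    refine Fintype.sum_congr _ _ fun y => ?_
    rw [Equiv.coe_addRight, show y + (a + b) - a = y + b by abel,
      show y + (a + b) - b = y + a by abel, mul_comm]
  have shift₀ : ∀ a : G, ∑ y, spin (σ (y - a)) * spin (σ y)
      = ∑ y, spin (σ (y + a)) * spin (σ y) := fun a => by
    simpa only [sub_zero, add_zero] using shift a 0
  simp only [hg, Finset.sum_add_distrib, ← Finset.mul_sum, add_mul, shift, shift₀]

theorem prod_symm_even_sub_eq_prod_add (f : Bool → Bool → Bool → ℝ) (hpos : ∀ s t u, 0 < f s t u)
    (hsymm : ∀ s t u, f s t u = f t s u) (heven : ∀ s t u, f (!s) (!t) (!u) = f s t u)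
    (σ : G → Bool) (a b : G) :
    ∏ y, f (σ (y - a)) (σ (y - b)) (σ y) = ∏ y, f (σ (y + a)) (σ (y + b)) (σ y) := by
  have hlog := sum_symm_even_sub_eq_sum_add (fun s t u => Real.log (f s t u))
    (fun s t u => by rw [hsymm]) (fun s t u => by rw [heven]) σ a b
  have hexp : ∀ s t u, Real.exp (Real.log (f s t u)) = f s t u := fun s t u =>
    Real.exp_log (hpos s t u)
  simpa only [Real.exp_sum, hexp] using congrArg Real.exp hlog

end Translation

section Torus

variable {L : ℕ}

lemma upN_eq_add (x : Site L) : upN x = x + (0, 1) := by ext <;> simp [upN]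
lemma rtN_eq_add (x : Site L) : rtN x = x + (1, 0) := by ext <;> simp [rtN]
lemma dnN_eq_sub (x : Site L) : dnN x = x - (0, 1) := by ext <;> simp [dnN]
lemma lfN_eq_sub (x : Site L) : lfN x = x - (1, 0) := by ext <;> simp [lfN]

variable [NeZero L]

lemma neg_pairH_eq_sum_mul_spin_snd (J q : ℝ) (σ τ : Cfg L) :
    -pairH L J q σ τ
      = ∑ y, (J * (spin (σ (dnN y)) + spin (σ (lfN y))) + q * spin (σ y)) * spin (τ y) := by
  have up := sum_comp_add_eq_sum_sub (fun x y => J * spin (σ x) * spin (τ y)) (0, 1)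
  have rt := sum_comp_add_eq_sum_sub (fun x y => J * spin (σ x) * spin (τ y)) (1, 0)
  simp only [← upN_eq_add, ← rtN_eq_add, ← dnN_eq_sub, ← lfN_eq_sub] at up rt
  simp only [pairH, neg_neg, mul_add, add_mul, Finset.sum_add_distrib, up, rt]

lemma neg_pairH_eq_sum_mul_spin_fst (J q : ℝ) (σ τ : Cfg L) :
    -pairH L J q τ σ
      = ∑ y, (J * (spin (σ (upN y)) + spin (σ (rtN y))) + q * spin (σ y)) * spin (τ y) := by
  simp only [pairH, neg_neg]
  exact Finset.sum_congr rfl fun y _ => by ring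

end Torus

theorem stmt4 (L : ℕ) [NeZero L] (J q : ℝ) (σ : Cfg L) :
    ∑ τ : Cfg L, Real.exp (-(pairH L J q σ τ)) =
      ∑ τ : Cfg L, Real.exp (-(pairH L J q τ σ)) := by
  simp only [neg_pairH_eq_sum_mul_spin_snd J q σ, neg_pairH_eq_sum_mul_spin_fst J q σ,
    sum_exp_sum_mul_spin, dnN_eq_sub, lfN_eq_sub, upN_eq_add, rtN_eq_add]
  refine prod_symm_even_sub_eq_prod_add
    (fun s t u => 2 * Real.cosh (J * (spin s + spin t) + q * spin u))
    (fun _ _ _ => by positivity) (fun s t u => by rw [add_comm (spin s)]) (fun s t u => ?_) σ (0, 1) (1, 0)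
  rw [spin_not, spin_not, spin_not, ← Real.cosh_neg (J * (spin s + spin t) + q * spin u)]
  ring_nf
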